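/- arXiv:2305.00311 — 2 statements merged into one kernel-verified Lean document; each statement's English description precedes it below -/
import Mathlib

section
/- For any two matrices A and B of the same dimensions, the nuclear norm satisfies ‖A‖_* − ‖B‖_* ≤ ‖Pr_A[A − B]‖_* − ‖Pr_A^⊥[A − B]‖_*, where Pr_A^⊥(M) = P_{S1⊥(A)} M P_{S2⊥(A)} is the projection onto the complement of the row/column spaces of A and Pr_A(M) = M − Pr_A^⊥(M). -/
open scoped BigOperators

noncomputable def frob {m n : Type*} [Fintype m] [Fintype n] (A : Matrix m n ℝ) : ℝ :=
  Real.sqrt (∑ i, ∑ j, (A i j)^2)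

noncomputable def opNorm {m n : Type*} [Fintype m] [Fintype n] [DecidableEq m] [DecidableEq n]
    (A : Matrix m n ℝ) : ℝ :=
  ‖LinearMap.toContinuousLinearMap (Matrix.toEuclideanLin A)‖

noncomputable def nuclearNorm {m n : Type*} [Fintype m] [Fintype n] [DecidableEq n]
    (A : Matrix m n ℝ) : ℝ :=
  ∑ i, Real.sqrt (((by simpa [Matrix.conjTranspose_eq_transpose_of_trivial] using
    Matrix.isHermitian_conjTranspose_mul_self A : (A.transpose * A).IsHermitian)).eigenvalues i)

noncomputable def colSpace {m n : Type*} [Fintype m] [Fintype n] [DecidableEq n]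
    (A : Matrix m n ℝ) : Submodule ℝ (EuclideanSpace ℝ m) :=
  LinearMap.range (Matrix.toEuclideanLin A)

noncomputable def projMat {m : Type*} [Fintype m] [DecidableEq m]
    (S : Submodule ℝ (EuclideanSpace ℝ m)) : Matrix m m ℝ :=
  Matrix.toEuclideanLin.symm (S.subtype ∘ₗ (S.orthogonalProjectionOnto).toLinearMap)

noncomputable def PrPerp {m n : Type*} [Fintype m] [Fintype n] [DecidableEq m] [DecidableEq n]
    (A B : Matrix m n ℝ) : Matrix m n ℝ :=
  projMat (colSpace A).orthogonal * B * projMat (colSpace A.transpose).orthogonal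

noncomputable def Pr {m n : Type*} [Fintype m] [Fintype n] [DecidableEq m] [DecidableEq n]
    (A B : Matrix m n ℝ) : Matrix m n ℝ :=
  B - PrPerp A B

noncomputable def maxEig {k : Type*} [Fintype k] [DecidableEq k] (M : Matrix k k ℝ) : ℝ :=
  sSup (spectrum ℝ M)
noncomputable def minEig {k : Type*} [Fintype k] [DecidableEq k] (M : Matrix k k ℝ) : ℝ :=
  sInf (spectrum ℝ M)
noncomputable def condNum {k : Type*} [Fintype k] [DecidableEq k] (M : Matrix k k ℝ) : ℝ :=
  maxEig M / minEig M

/-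
Duality with the operator norm. Put `Δ = Pr_A^⊥(A - B)` and let `Z = U_A V_Aᵀ - U_Δ V_Δᵀ` be the
difference of the polar factors of `A` and `Δ`. Since `A` and `Δ` have orthogonal column spaces
and orthogonal row spaces, `Z` is a contraction, so the trace pairing `⟨Z, M⟩ = tr (Zᵀ M)` is
at most `‖M‖_*` for every `M`, while `⟨Z, A⟩ = ‖A‖_*` and `⟨Z, Δ⟩ = -‖Δ‖_*`. Writing
`B = A - Pr_A(A - B) - Δ` gives
`‖B‖_* ≥ ⟨Z, B⟩ = ‖A‖_* - ⟨Z, Pr_A(A - B)⟩ + ‖Δ‖_* ≥ ‖A‖_* - ‖Pr_A(A - B)‖_* + ‖Δ‖_*`.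
-/

open scoped RealInnerProductSpace
open LinearMap (range ker)
open scoped Matrix

section InnerProductSpace

variable {E F : Type*} [NormedAddCommGroup E] [InnerProductSpace ℝ E]
  [NormedAddCommGroup F] [InnerProductSpace ℝ F]

namespace LinearMap

theorem norm_sub_apply_le_of_orthogonal {f g : E →ₗ[ℝ] F}
    (hf : ∀ x, ‖f x‖ ≤ ‖x‖) (hg : ∀ x, ‖g x‖ ≤ ‖x‖) {S : Submodule ℝ E} [S.HasOrthogonalProjection]
    {T : Submodule ℝ F}
    (hfS : Sᗮ ≤ ker f) (hgS : S ≤ ker g) (hfT : range f ≤ T) (hgT : range g ≤ Tᗮ) (x : E) :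
    ‖(f - g) x‖ ≤ ‖x‖ := by
  set p := S.starProjection x
  set q := x - p
  have hq : q ∈ Sᗮ := S.sub_starProjection_mem_orthogonal x
  have hp : p ∈ S := S.starProjection_apply_mem x
  have hx : p + q = x := add_sub_cancel p x
  have hfx : f x = f p := by
    rw [← hx, map_add, hfS hq, add_zero]
  have hgx : g x = g q := by
    rw [← hx, map_add, hgS hp, zero_add]
  have hsq : ‖f x - g x‖ ^ 2 ≤ ‖x‖ ^ 2 := calc
    ‖f x - g x‖ ^ 2 = ‖f p‖ ^ 2 + ‖g q‖ ^ 2 := by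
      rw [hfx, hgx, sq, sq, sq, norm_sub_sq_eq_norm_sq_add_norm_sq_real
        (Submodule.inner_right_of_mem_orthogonal (hfT ⟨p, rfl⟩) (hgT ⟨q, rfl⟩))]
    _ ≤ ‖p‖ ^ 2 + ‖q‖ ^ 2 := by gcongr <;> apply_assumption
    _ = ‖x‖ ^ 2 := by
      rw [← hx, sq, sq, sq, norm_add_sq_eq_norm_sq_add_norm_sq_real
        (Submodule.inner_right_of_mem_orthogonal hp hq)]
  exact pow_le_pow_iff_left₀ (norm_nonneg _) (norm_nonneg _) two_ne_zero |>.mp hsq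

variable [FiniteDimensional ℝ E] [FiniteDimensional ℝ F]

noncomputable def hilbertSchmidtInner (f g : E →ₗ[ℝ] F) : ℝ :=
  trace ℝ E (f.adjoint ∘ₗ g)

theorem hilbertSchmidtInner_eq_sum {ι : Type*} [Fintype ι] (b : OrthonormalBasis ι ℝ E)
    (f g : E →ₗ[ℝ] F) : hilbertSchmidtInner f g = ∑ i, ⟪f (b i), g (b i)⟫ := by
  simp [hilbertSchmidtInner, trace_eq_sum_inner _ b, adjoint_inner_right]

theorem hilbertSchmidtInner_sub_left (f g h : E →ₗ[ℝ] F) :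
    hilbertSchmidtInner (f - g) h = hilbertSchmidtInner f h - hilbertSchmidtInner g h := by
  simp [hilbertSchmidtInner, sub_comp]

theorem hilbertSchmidtInner_sub_right (f g h : E →ₗ[ℝ] F) :
    hilbertSchmidtInner f (g - h) = hilbertSchmidtInner f g - hilbertSchmidtInner f h := by
  simp [hilbertSchmidtInner, comp_sub]

theorem hilbertSchmidtInner_eq_zero_of_range_le_orthogonal {f g : E →ₗ[ℝ] F}
    {T : Submodule ℝ F} (hf : range f ≤ T) (hg : range g ≤ Tᗮ) : hilbertSchmidtInner f g = 0 := by
  rw [hilbertSchmidtInner_eq_sum (stdOrthonormalBasis ℝ E)]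
  exact Finset.sum_eq_zero fun i _ ↦
    Submodule.inner_right_of_mem_orthogonal (hf ⟨_, rfl⟩) (hg ⟨_, rfl⟩)

theorem hilbertSchmidtInner_le_sum_norm {ι : Type*} [Fintype ι] (b : OrthonormalBasis ι ℝ E)
    {f : E →ₗ[ℝ] F} (hf : ∀ x, ‖f x‖ ≤ ‖x‖) (g : E →ₗ[ℝ] F) :
    hilbertSchmidtInner f g ≤ ∑ i, ‖g (b i)‖ := by
  rw [hilbertSchmidtInner_eq_sum b]
  refine Finset.sum_le_sum fun i _ ↦ ?_
  calc ⟪f (b i), g (b i)⟫ ≤ ‖f (b i)‖ * ‖g (b i)‖ := real_inner_le_norm _ _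
    _ ≤ ‖b i‖ * ‖g (b i)‖ := by gcongr; exact hf _
    _ = ‖g (b i)‖ := by rw [b.norm_eq_one, one_mul]

end LinearMap

end InnerProductSpace

namespace Matrix

variable {m n : Type*} [Fintype m]

theorem isHermitian_transpose_mul_self (M : Matrix m n ℝ) : (Mᵀ * M).IsHermitian := by
  simpa [conjTranspose_eq_transpose_of_trivial] using isHermitian_conjTranspose_mul_self M

variable [Fintype n] [DecidableEq n]

theorem toEuclideanLin_transpose_eq_adjoint [DecidableEq m] (M : Matrix m n ℝ) :
    Mᵀ.toEuclideanLin = M.toEuclideanLin.adjoint := by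
  rw [← toEuclideanLin_conjTranspose_eq_adjoint, conjTranspose_eq_transpose_of_trivial]

variable (M : Matrix m n ℝ)

noncomputable abbrev rightSingularBasis : OrthonormalBasis n ℝ (EuclideanSpace ℝ n) :=
  M.isHermitian_transpose_mul_self.eigenvectorBasis

noncomputable abbrev singularValue (j : n) : ℝ :=
  √(M.isHermitian_transpose_mul_self.eigenvalues j)

/-- Zero when `singularValue M j = 0`, since `0⁻¹ = 0`. -/
noncomputable def leftSingularVector (j : n) : EuclideanSpace ℝ m :=
  (M.singularValue j)⁻¹ • M.toEuclideanLin (M.rightSingularBasis j)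

local notation "v" => M.rightSingularBasis
local notation "σ" => M.singularValue
local notation "u" => M.leftSingularVector

theorem nuclearNorm_eq_sum_singularValue : nuclearNorm M = ∑ j, σ j := rfl

theorem inner_toEuclideanLin_rightSingularBasis (x : EuclideanSpace ℝ n) (j : n) :
    ⟪M.toEuclideanLin x, M.toEuclideanLin (v j)⟫ =
      M.isHermitian_transpose_mul_self.eigenvalues j * ⟪x, v j⟫ := by
  classical
  rw [← LinearMap.adjoint_inner_right, ← toEuclideanLin_transpose_eq_adjoint,
    ← LinearMap.comp_apply, ← toLpLin_mul_same, toLpLin_apply,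
    M.isHermitian_transpose_mul_self.mulVec_eigenvectorBasis j, WithLp.toLp_smul,
    WithLp.toLp_ofLp, real_inner_smul_right]

theorem norm_toEuclideanLin_rightSingularBasis (j : n) : ‖M.toEuclideanLin (v j)‖ = σ j := by
  rw [norm_eq_sqrt_real_inner, inner_toEuclideanLin_rightSingularBasis, (v).inner_eq_one, mul_one]

theorem inner_leftSingularVector_toEuclideanLin (j : n) :
    ⟪u j, M.toEuclideanLin (v j)⟫ = σ j := by
  rw [leftSingularVector, real_inner_smul_left, real_inner_self_eq_norm_sq,
    norm_toEuclideanLin_rightSingularBasis, sq, ← mul_assoc, inv_mul_mul_self]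

theorem inner_leftSingularVector_of_ne {i j : n} (h : i ≠ j) : ⟪u i, u j⟫ = 0 := by
  simp [leftSingularVector, real_inner_smul_left, real_inner_smul_right,
    inner_toEuclideanLin_rightSingularBasis, (v).inner_eq_zero h]

theorem norm_leftSingularVector_le (j : n) : ‖u j‖ ≤ 1 := by
  rw [leftSingularVector, norm_smul, norm_toEuclideanLin_rightSingularBasis, norm_inv,
    Real.norm_of_nonneg (Real.sqrt_nonneg _)]
  exact inv_mul_le_one_of_le₀ le_rfl (Real.sqrt_nonneg _)

theorem leftSingularVector_mem_range (j : n) : u j ∈ range M.toEuclideanLin :=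
  Submodule.smul_mem _ _ ⟨_, rfl⟩

theorem inner_rightSingularBasis_smul_leftSingularVector_of_mem_ker {x : EuclideanSpace ℝ n}
    (hx : x ∈ ker M.toEuclideanLin) (j : n) : ⟪x, v j⟫ • u j = 0 := by
  have h := M.inner_toEuclideanLin_rightSingularBasis x j
  rw [LinearMap.mem_ker.mp hx, inner_zero_left, zero_eq_mul] at h
  rcases h with h | h
  · simp [leftSingularVector, singularValue, h]
  · rw [h, zero_smul]

/-- The partial isometry `U Vᵀ` of a singular value decomposition `M = U Σ Vᵀ`. -/
noncomputable def polarFactor : EuclideanSpace ℝ n →ₗ[ℝ] EuclideanSpace ℝ m :=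
  ∑ j, (innerₛₗ ℝ (v j)).smulRight (u j)

theorem polarFactor_apply (x : EuclideanSpace ℝ n) : M.polarFactor x = ∑ j, ⟪v j, x⟫ • u j := by
  simp [polarFactor]

theorem polarFactor_rightSingularBasis (j : n) : M.polarFactor (v j) = u j := by
  rw [polarFactor_apply, Finset.sum_eq_single j (fun i _ hij ↦ by rw [(v).inner_eq_zero hij,
    zero_smul]) (by simp), (v).inner_eq_one, one_smul]

theorem range_polarFactor_le : range M.polarFactor ≤ range M.toEuclideanLin := by
  rintro _ ⟨x, rfl⟩
  rw [polarFactor_apply]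
  exact Submodule.sum_mem _ fun j _ ↦ Submodule.smul_mem _ _ (M.leftSingularVector_mem_range j)

theorem ker_le_ker_polarFactor : ker M.toEuclideanLin ≤ ker M.polarFactor := by
  intro x hx
  rw [LinearMap.mem_ker, polarFactor_apply]
  refine Finset.sum_eq_zero fun j _ ↦ ?_
  rw [real_inner_comm]
  exact M.inner_rightSingularBasis_smul_leftSingularVector_of_mem_ker hx j

theorem inner_leftSingularVector_polarFactor (i : n) (x : EuclideanSpace ℝ n) :
    ⟪u i, M.polarFactor x⟫ = ⟪v i, x⟫ * ‖u i‖ ^ 2 := by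
  rw [polarFactor_apply, inner_sum, Finset.sum_eq_single i (fun j _ hji ↦ by
    rw [real_inner_smul_right, M.inner_leftSingularVector_of_ne hji.symm, mul_zero]) (by simp),
    real_inner_smul_right, real_inner_self_eq_norm_sq]

theorem norm_polarFactor_apply_le (x : EuclideanSpace ℝ n) : ‖M.polarFactor x‖ ≤ ‖x‖ := by
  have hsq : ‖M.polarFactor x‖ ^ 2 ≤ ‖x‖ ^ 2 := calc
    ‖M.polarFactor x‖ ^ 2 = ∑ j, ⟪v j, x⟫ ^ 2 * ‖u j‖ ^ 2 := by
      conv_lhs => rw [← real_inner_self_eq_norm_sq, polarFactor_apply]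
      simp_rw [sum_inner, real_inner_smul_left, ← polarFactor_apply,
        inner_leftSingularVector_polarFactor, ← mul_assoc, sq]
    _ ≤ ∑ j, ⟪v j, x⟫ ^ 2 := Finset.sum_le_sum fun j _ ↦
      mul_le_of_le_one_right (sq_nonneg _)
        (pow_le_one₀ (norm_nonneg _) (M.norm_leftSingularVector_le j))
    _ = ‖x‖ ^ 2 := (v).sum_sq_inner_right x
  exact pow_le_pow_iff_left₀ (norm_nonneg _) (norm_nonneg _) two_ne_zero |>.mp hsq

theorem hilbertSchmidtInner_polarFactor_self :
    LinearMap.hilbertSchmidtInner M.polarFactor M.toEuclideanLin = nuclearNorm M := by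
  rw [nuclearNorm_eq_sum_singularValue,
    LinearMap.hilbertSchmidtInner_eq_sum M.rightSingularBasis]
  simp_rw [polarFactor_rightSingularBasis, inner_leftSingularVector_toEuclideanLin]

theorem hilbertSchmidtInner_le_nuclearNorm {f : EuclideanSpace ℝ n →ₗ[ℝ] EuclideanSpace ℝ m}
    (hf : ∀ x, ‖f x‖ ≤ ‖x‖) : LinearMap.hilbertSchmidtInner f M.toEuclideanLin ≤ nuclearNorm M := by
  simpa only [norm_toEuclideanLin_rightSingularBasis, nuclearNorm_eq_sum_singularValue] using
    LinearMap.hilbertSchmidtInner_le_sum_norm M.rightSingularBasis hf M.toEuclideanLin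

end Matrix

section Projections

variable {m n : Type*} [Fintype m] [Fintype n] [DecidableEq m] [DecidableEq n]

theorem toEuclideanLin_projMat (S : Submodule ℝ (EuclideanSpace ℝ m)) :
    (projMat S).toEuclideanLin = S.starProjection.toLinearMap :=
  Matrix.toEuclideanLin.apply_symm_apply _

theorem orthogonal_colSpace_transpose (A : Matrix m n ℝ) :
    (colSpace Aᵀ)ᗮ = ker A.toEuclideanLin := by
  rw [colSpace, Matrix.toEuclideanLin_transpose_eq_adjoint, LinearMap.orthogonal_range,
    LinearMap.adjoint_adjoint]

theorem range_PrPerp_le_orthogonal_colSpace (A Δ : Matrix m n ℝ) :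
    range (PrPerp A Δ).toEuclideanLin ≤ (colSpace A)ᗮ := by
  rintro _ ⟨x, rfl⟩
  rw [PrPerp, Matrix.mul_assoc, Matrix.toLpLin_mul_same, LinearMap.comp_apply,
    toEuclideanLin_projMat]
  exact Submodule.starProjection_apply_mem _ _

theorem colSpace_transpose_le_ker_PrPerp (A Δ : Matrix m n ℝ) :
    colSpace Aᵀ ≤ ker (PrPerp A Δ).toEuclideanLin := by
  intro x hx
  rw [LinearMap.mem_ker, PrPerp, Matrix.toLpLin_mul_same, LinearMap.comp_apply,
    toEuclideanLin_projMat, ContinuousLinearMap.coe_coe,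
    Submodule.starProjection_orthogonal_apply_eq_zero hx, map_zero]

end Projections

theorem norm_polarFactor_sub_polarFactor_PrPerp_apply_le {m n : Type*} [Fintype m] [Fintype n]
    [DecidableEq m] [DecidableEq n] (A Δ : Matrix m n ℝ) (x : EuclideanSpace ℝ n) :
    ‖(A.polarFactor - (PrPerp A Δ).polarFactor) x‖ ≤ ‖x‖ :=
  LinearMap.norm_sub_apply_le_of_orthogonal A.norm_polarFactor_apply_le
    (PrPerp A Δ).norm_polarFactor_apply_le
    ((orthogonal_colSpace_transpose A).trans_le A.ker_le_ker_polarFactor)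
    ((colSpace_transpose_le_ker_PrPerp A Δ).trans (PrPerp A Δ).ker_le_ker_polarFactor)
    A.range_polarFactor_le
    ((PrPerp A Δ).range_polarFactor_le.trans (range_PrPerp_le_orthogonal_colSpace A Δ)) x

/-- Nuclear-norm triangle-type inequality:
‖A‖_* − ‖B‖_* ≤ ‖Pr_A[A − B]‖_* − ‖Pr_A^⊥[A − B]‖_*. -/
theorem nuclear_norm_projection_inequality {m n : ℕ}
    (A B : Matrix (Fin m) (Fin n) ℝ) :
    nuclearNorm A - nuclearNorm B ≤
      nuclearNorm (Pr A (A - B)) - nuclearNorm (PrPerp A (A - B)) := by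
  set Δ := PrPerp A (A - B)
  set Z := A.polarFactor - Δ.polarFactor
  have hZ : ∀ x, ‖Z x‖ ≤ ‖x‖ := norm_polarFactor_sub_polarFactor_PrPerp_apply_le A (A - B)
  have hZA : Z.hilbertSchmidtInner A.toEuclideanLin = nuclearNorm A := by
    rw [LinearMap.hilbertSchmidtInner_sub_left, A.hilbertSchmidtInner_polarFactor_self,
      LinearMap.hilbertSchmidtInner_eq_zero_of_range_le_orthogonal
        (Δ.range_polarFactor_le.trans (range_PrPerp_le_orthogonal_colSpace A (A - B)))
        (colSpace A).le_orthogonal_orthogonal, sub_zero]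
  have hZΔ : Z.hilbertSchmidtInner Δ.toEuclideanLin = -nuclearNorm Δ := by
    rw [LinearMap.hilbertSchmidtInner_sub_left, Δ.hilbertSchmidtInner_polarFactor_self,
      LinearMap.hilbertSchmidtInner_eq_zero_of_range_le_orthogonal A.range_polarFactor_le
        (range_PrPerp_le_orthogonal_colSpace A (A - B)), zero_sub]
  have hB : B.toEuclideanLin =
      A.toEuclideanLin - (Pr A (A - B)).toEuclideanLin - Δ.toEuclideanLin := by
    rw [← map_sub, ← map_sub, Pr]
    congr 1
    abel
  have hZB := B.hilbertSchmidtInner_le_nuclearNorm hZ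
  rw [hB, LinearMap.hilbertSchmidtInner_sub_right, LinearMap.hilbertSchmidtInner_sub_right, hZA,
    hZΔ] at hZB
  linarith [(Pr A (A - B)).hilbertSchmidtInner_le_nuclearNorm hZ]
end

section
/- Let A be a complex n × n matrix with spectral radius ρ(A) < 1. Then |det(I + A)| ≥ exp( Re(tr A) − (‖A‖_2² / 2) / (1 − ρ(A)) ), where ‖A‖_2 denotes the Frobenius norm. -/
open scoped BigOperators

/-- Frobenius norm of a complex matrix. -/
noncomputable def frobC {n : Type*} [Fintype n] (A : Matrix n n ℂ) : ℝ :=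
  Real.sqrt (∑ i, ∑ j, ‖A i j‖ ^ 2)

/-- Spectral radius: maximum modulus of the eigenvalues of A. -/
noncomputable def specRad {n : ℕ} (A : Matrix (Fin n) (Fin n) ℂ) : ℝ :=
  sSup ((fun z : ℂ => ‖z‖) '' spectrum ℂ A)

/-!
A unitary (Schur) triangularization `T = U⋆ A U` puts the eigenvalues `λᵢ` of `A` on the diagonal
of an upper triangular matrix while preserving `det (1 + ·)`, the trace and the Frobenius norm.
Hence `|det (1 + A)| = ∏ |1 + λᵢ|`, `Re tr A = ∑ Re λᵢ` and `∑ |λᵢ|² ≤ ‖T‖₂² = ‖A‖₂²`, and the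
theorem is the product of the scalar bounds `|1 + λ| ≥ exp (Re λ - |λ|² / (2 (1 - ρ)))`. These come
from `log (1 + x) ≥ x - x² / (2 (1 - |x|))` on `(-1, 1)`, applied to `x = Re λ`.
-/

open Real Matrix Module Unitary
open scoped InnerProductSpace

theorem Real.sub_sq_div_le_log_one_add {x : ℝ} (hx : |x| < 1) :
    x - x ^ 2 / (2 * (1 - |x|)) ≤ log (1 + x) := by
  rcases le_or_gt 0 x with hx0 | hx0
  · rw [abs_of_nonneg hx0] at hx ⊢
    have h₁ : x ^ 2 / 2 ≤ x ^ 2 / (2 * (1 - x)) := by gcongr; linarith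
    have h₂ : x - x ^ 2 / 2 ≤ 2 * x / (x + 2) := by
      rw [le_div_iff₀ (by linarith)]
      nlinarith [pow_nonneg hx0 3]
    linarith [le_log_one_add_of_nonneg hx0]
  · obtain ⟨t, rfl⟩ : ∃ t, x = -t := ⟨-x, by ring⟩
    rw [abs_of_neg hx0, neg_neg] at hx
    rw [abs_of_neg hx0, neg_neg, neg_sq, ← sub_eq_add_neg]
    have h2t : 2 - t ≠ 0 := by linarith
    have h1t : 1 - t ≠ 0 := by linarith
    -- with `y = t / (2 - t)`, `(1 + y) / (1 - y) = (1 - t)⁻¹`; the series bound at order one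
    -- then is exactly the claim
    have hy := log_div_le_sum_range_add (x := t / (2 - t)) (div_nonneg (by linarith) (by linarith))
      (by rw [div_lt_one (by linarith)]; linarith) 1
    have hratio : (1 + t / (2 - t)) / (1 - t / (2 - t)) = (1 - t)⁻¹ := by
      have : 2 - t - t ≠ 0 := by linarith
      field_simp
      ring
    have hden : 1 - (t / (2 - t)) ^ 2 = 4 * (1 - t) / (2 - t) ^ 2 := by
      field_simp
      ring
    have hsum : t / (2 - t) + (t / (2 - t)) ^ 3 / (4 * (1 - t) / (2 - t) ^ 2)
        = (t + t ^ 2 / (2 * (1 - t))) / 2 := by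
      field_simp
      ring
    rw [hratio, log_inv, Finset.sum_range_one, hden] at hy
    simp only [mul_zero, zero_add, pow_one, Nat.cast_zero, div_one, Nat.reduceMul,
      Nat.reduceAdd] at hy
    rw [hsum] at hy
    linarith

theorem Complex.exp_re_sub_norm_sq_div_le_norm_one_add {z : ℂ} {r : ℝ} (hz : ‖z‖ ≤ r)
    (hr : r < 1) : Real.exp (z.re - ‖z‖ ^ 2 / (2 * (1 - r))) ≤ ‖1 + z‖ := by
  have hre : |z.re| ≤ ‖z‖ := abs_re_le_norm z
  have hsq : z.re ^ 2 ≤ ‖z‖ ^ 2 := by rw [← sq_abs]; gcongr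
  have hlog : z.re - ‖z‖ ^ 2 / (2 * (1 - r)) ≤ Real.log (1 + z.re) := by
    refine le_trans ?_ (Real.sub_sq_div_le_log_one_add (by linarith))
    gcongr z.re - ?_ / (2 * ?_)
    linarith
  calc Real.exp (z.re - ‖z‖ ^ 2 / (2 * (1 - r)))
      ≤ 1 + z.re := (Real.le_log_iff_exp_le (by linarith [neg_abs_le z.re])).1 hlog
    _ ≤ ‖1 + z‖ := by simpa using re_le_norm (1 + z)

theorem Orthonormal.snoc {𝕜 E : Type*} [RCLike 𝕜] [NormedAddCommGroup E] [InnerProductSpace 𝕜 E]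
    {n : ℕ} {v : Fin n → E} {u : E} (hv : Orthonormal 𝕜 v) (hu : ‖u‖ = 1)
    (huv : ∀ j, ⟪u, v j⟫_𝕜 = 0) : Orthonormal 𝕜 (Fin.snoc v u : Fin (n + 1) → E) := by
  refine ⟨fun i => ?_, fun i j hij => ?_⟩
  · induction i using Fin.lastCases <;> simp [hu, hv.1]
  · induction i using Fin.lastCases <;> induction j using Fin.lastCases
    · exact absurd rfl hij
    · simp [huv]
    · simp [inner_eq_zero_symm.1 (huv _)]
    · simpa using hv.2 (ne_of_apply_ne _ hij)

theorem LinearMap.exists_orthonormalBasis_inner_apply_eq_zero_of_lt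
    {E : Type*} [NormedAddCommGroup E] [InnerProductSpace ℂ E] [FiniteDimensional ℂ E]
    {n : ℕ} (hn : finrank ℂ E = n) (f : E →ₗ[ℂ] E) :
    ∃ b : OrthonormalBasis (Fin n) ℂ E, ∀ i j, j < i → ⟪b i, f (b j)⟫_ℂ = 0 := by
  induction n generalizing E with
  | zero =>
    exact ⟨(stdOrthonormalBasis ℂ E).reindex (finCongr hn), fun i => i.elim0⟩
  | succ n ih =>
    have : Nontrivial E := Module.finrank_pos_iff (R := ℂ).1 (by omega)
    obtain ⟨μ, hμ⟩ := Module.End.exists_eigenvalue (LinearMap.adjoint f)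
    obtain ⟨v, hv⟩ := hμ.exists_hasEigenvector
    set u : E := ((‖v‖ : ℂ))⁻¹ • v
    have hu : ‖u‖ = 1 := norm_smul_inv_norm hv.2
    have hfu : LinearMap.adjoint f u = μ • u := by
      simp only [u, map_smul, hv.apply_eq_smul, smul_comm μ]
    -- `u` is an eigenvector of the adjoint, so its orthogonal complement is `f`-invariant
    have hW : ∀ w ∈ (ℂ ∙ u)ᗮ, f w ∈ (ℂ ∙ u)ᗮ := by
      intro w hw
      rw [Submodule.mem_orthogonal_singleton_iff_inner_right] at hw ⊢
      rw [← LinearMap.adjoint_inner_left, hfu, inner_smul_left, hw, mul_zero]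
    have : Fact (finrank ℂ E = n + 1) := ⟨hn⟩
    have hu0 : u ≠ 0 := ne_zero_of_norm_ne_zero (by simp [hu])
    obtain ⟨c, hc⟩ := ih (Submodule.finrank_orthogonal_span_singleton hu0) (f.restrict hW)
    set b : Fin (n + 1) → E := Fin.snoc (fun j => (c j : E)) u
    have hb : Orthonormal ℂ b := (c.orthonormal.comp_linearIsometry (ℂ ∙ u)ᗮ.subtypeₗᵢ).snoc hu
      fun j => Submodule.mem_orthogonal_singleton_iff_inner_right.1 (c j).2
    refine ⟨OrthonormalBasis.mk hb ?_, ?_⟩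
    · exact (hb.linearIndependent.span_eq_top_of_card_eq_finrank (by simp [hn])).ge
    · intro i j hij
      induction i using Fin.lastCases <;> induction j using Fin.lastCases
      · exact absurd hij (lt_irrefl _)
      · simpa [b] using Submodule.mem_orthogonal_singleton_iff_inner_right.1 (hW _ (c _).2)
      · exact absurd hij (Fin.castSucc_lt_last _).not_gt
      · simpa [b, Submodule.coe_inner] using hc _ _ (Fin.castSucc_lt_castSucc_iff.1 hij)

theorem Matrix.exists_isUpperTriangular_conjStarAlgAut {n : ℕ} (A : Matrix (Fin n) (Fin n) ℂ) :
    ∃ U : unitaryGroup (Fin n) ℂ, (conjStarAlgAut ℂ _ (star U) A).IsUpperTriangular := by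
  obtain ⟨b, hb⟩ :=
    (toEuclideanLin A).exists_orthonormalBasis_inner_apply_eq_zero_of_lt finrank_euclideanSpace_fin
  refine ⟨⟨_, (EuclideanSpace.basisFun (Fin n) ℂ).toMatrix_orthonormalBasis_mem_unitary b⟩,
    fun i j hij => ?_⟩
  -- the columns of `U` are the vectors `b j`, so `(U⋆ A U) i j = ⟪b i, A (b j)⟫`
  rw [← hb i j hij, EuclideanSpace.inner_eq_star_dotProduct]
  simp only [conjStarAlgAut_apply, coe_star, star_star, mul_apply, star_apply,
    Basis.toMatrix_apply, OrthonormalBasis.coe_toBasis_repr_apply, EuclideanSpace.basisFun_repr,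
    RCLike.star_def, Finset.sum_mul, mul_assoc, dotProduct, ofLp_toLpLin, toLin'_apply, mulVec,
    Pi.star_apply]
  exact Finset.sum_comm.trans (by simp only [mul_comm, mul_assoc])

section UnitaryConjugation

variable {n R : Type*} [Fintype n] [DecidableEq n] [CommRing R] [StarRing R]
  (U : unitaryGroup n R) (X : Matrix n n R)

theorem Matrix.det_conjStarAlgAut : (conjStarAlgAut R _ U X).det = X.det := by
  rw [conjStarAlgAut_apply, det_mul_comm, ← mul_assoc, coe_star_mul_self, one_mul]

theorem Matrix.trace_conjStarAlgAut : (conjStarAlgAut R _ U X).trace = X.trace := by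
  rw [conjStarAlgAut_apply, trace_mul_comm, ← mul_assoc, coe_star_mul_self, one_mul]

end UnitaryConjugation

theorem frobC_sq {n : Type*} [Fintype n] (A : Matrix n n ℂ) :
    frobC A ^ 2 = ∑ i, ∑ j, ‖A i j‖ ^ 2 :=
  Real.sq_sqrt (by positivity)

theorem Matrix.ofReal_sum_norm_sq_eq_trace_conjTranspose_mul_self {n : Type*} [Fintype n]
    (A : Matrix n n ℂ) : ((∑ i, ∑ j, ‖A i j‖ ^ 2 : ℝ) : ℂ) = (Aᴴ * A).trace := by
  rw [Finset.sum_comm]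
  push_cast
  simp [trace, mul_apply, Complex.conj_mul']

theorem frobC_conjStarAlgAut {n : Type*} [Fintype n] [DecidableEq n] (U : unitaryGroup n ℂ)
    (A : Matrix n n ℂ) : frobC (conjStarAlgAut ℂ _ U A) = frobC A := by
  unfold frobC
  congr 1
  apply Complex.ofReal_injective
  rw [ofReal_sum_norm_sq_eq_trace_conjTranspose_mul_self,
    ofReal_sum_norm_sq_eq_trace_conjTranspose_mul_self, ← star_eq_conjTranspose, ← map_star,
    ← map_mul, trace_conjStarAlgAut, star_eq_conjTranspose]

theorem sum_norm_diag_sq_le_frobC_sq {n : Type*} [Fintype n] (A : Matrix n n ℂ) :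
    ∑ i, ‖A i i‖ ^ 2 ≤ frobC A ^ 2 := by
  rw [frobC_sq]
  exact Finset.sum_le_sum fun i _ =>
    Finset.single_le_sum (f := fun j => ‖A i j‖ ^ 2) (fun _ _ => by positivity) (Finset.mem_univ i)

theorem norm_le_specRad_of_mem_spectrum {n : ℕ} {A : Matrix (Fin n) (Fin n) ℂ} {z : ℂ}
    (hz : z ∈ spectrum ℂ A) : ‖z‖ ≤ specRad A :=
  le_csSup (A.finite_spectrum.image _).bddAbove ⟨z, hz, rfl⟩

section UpperTriangular

variable {n K : Type*} [Fintype n] [DecidableEq n] [LinearOrder n] [Field K] {T : Matrix n n K}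

theorem Matrix.IsUpperTriangular.det_one_add (hT : T.IsUpperTriangular) :
    (1 + T).det = ∏ i, (1 + T i i) := by
  rw [det_of_isUpperTriangular (blockTriangular_one.add hT)]
  simp

theorem Matrix.IsUpperTriangular.diag_mem_spectrum (hT : T.IsUpperTriangular) (i : n) :
    T i i ∈ spectrum K T := by
  rw [mem_spectrum_iff_isRoot_charpoly, charpoly_of_isUpperTriangular T hT, Polynomial.IsRoot,
    Polynomial.eval_prod]
  exact Finset.prod_eq_zero (Finset.mem_univ i) (by simp)

end UpperTriangular

/-- If ρ(A) < 1 then |det(I + A)| ≥ exp( Re(tr A) − (‖A‖₂²/2)/(1 − ρ(A)) ). -/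
theorem abs_det_one_add_ge_of_specRad_lt_one {n : ℕ} (A : Matrix (Fin n) (Fin n) ℂ)
    (hρ : specRad A < 1) :
    ‖(1 + A).det‖ ≥
      Real.exp ((Matrix.trace A).re - (frobC A ^ 2 / 2) / (1 - specRad A)) := by
  obtain ⟨U, hT⟩ := exists_isUpperTriangular_conjStarAlgAut A
  set T := conjStarAlgAut ℂ _ (star U) A
  have hdiag : ∀ i, ‖T i i‖ ≤ specRad A := fun i => norm_le_specRad_of_mem_spectrum <| by
    simpa [T, conjStarAlgAut_apply] using hT.diag_mem_spectrum i
  have hexp : (Matrix.trace A).re - (frobC A ^ 2 / 2) / (1 - specRad A)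
      ≤ ∑ i, ((T i i).re - ‖T i i‖ ^ 2 / (2 * (1 - specRad A))) := by
    have htrace : ∑ i, (T i i).re = (Matrix.trace A).re := by
      rw [← Complex.re_sum, ← trace_conjStarAlgAut (star U) A]
      rfl
    rw [Finset.sum_sub_distrib, ← Finset.sum_div, htrace, ← frobC_conjStarAlgAut (star U) A,
      div_div]
    gcongr
    exact sum_norm_diag_sq_le_frobC_sq T
  calc Real.exp ((Matrix.trace A).re - (frobC A ^ 2 / 2) / (1 - specRad A))
      ≤ ∏ i, Real.exp ((T i i).re - ‖T i i‖ ^ 2 / (2 * (1 - specRad A))) := by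
        rw [← Real.exp_sum]
        exact Real.exp_le_exp.2 hexp
    _ ≤ ∏ i, ‖1 + T i i‖ := Finset.prod_le_prod (fun _ _ => (Real.exp_pos _).le)
        fun i _ => Complex.exp_re_sub_norm_sq_div_le_norm_one_add (hdiag i) hρ
    _ = ‖(1 + A).det‖ := by
        rw [← norm_prod, ← hT.det_one_add,
          show 1 + T = conjStarAlgAut ℂ _ (star U) (1 + A) by rw [map_add, map_one],
          det_conjStarAlgAut]
end
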